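/- arXiv:1702.08191 — 3 statements merged into one kernel-verified Lean document; each statement's English description precedes it below -/
import Mathlib

section
/- If H is a Hopf algebra and ω, χ are normalized convolution-invertible 2-cocycle functionals on H, then the twisted product h · g = ω(h₍₁₎, g₍₁₎) h₍₂₎g₍₂₎ χ⁻¹(h₍₃₎, g₍₃₎) on the underlying vector space of H is associative with the same unit as H. -/
open TensorProduct

noncomputable section

/-- Convolution product of linear maps from a coalgebra `C` to an algebra `A`:
`(f ∗ g)(c) = ∑ f(c₍₁₎) g(c₍₂₎)`. -/
def conv {C A : Type} [AddCommGroup C] [Module ℂ C] [Coalgebra ℂ C]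
    [Ring A] [Algebra ℂ A] (f g : C →ₗ[ℂ] A) : C →ₗ[ℂ] A :=
  LinearMap.mul' ℂ A ∘ₗ TensorProduct.map f g ∘ₗ Coalgebra.comul

variable {H : Type} [Ring H] [HopfAlgebra ℂ H]

/-- The functional `(g⊗h)⊗k ↦ ω(g₍₁₎,h₍₁₎)ω(g₍₂₎h₍₂₎,k)` as a convolution on `(H⊗H)⊗H`. -/
def cocycleLHS (ω : H ⊗[ℂ] H →ₗ[ℂ] ℂ) : (H ⊗[ℂ] H) ⊗[ℂ] H →ₗ[ℂ] ℂ :=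
  conv (LinearMap.mul' ℂ ℂ ∘ₗ TensorProduct.map ω Coalgebra.counit)
    (ω ∘ₗ TensorProduct.map (LinearMap.mul' ℂ H) LinearMap.id)

/-- The functional `(g⊗h)⊗k ↦ ω(h₍₁₎,k₍₁₎)ω(g,h₍₂₎k₍₂₎)` as a convolution on `(H⊗H)⊗H`. -/
def cocycleRHS (ω : H ⊗[ℂ] H →ₗ[ℂ] ℂ) : (H ⊗[ℂ] H) ⊗[ℂ] H →ₗ[ℂ] ℂ :=
  conv
    (LinearMap.mul' ℂ ℂ ∘ₗ TensorProduct.map Coalgebra.counit ω ∘ₗ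
      (TensorProduct.assoc ℂ H H H).toLinearMap)
    (ω ∘ₗ TensorProduct.map LinearMap.id (LinearMap.mul' ℂ H) ∘ₗ
      (TensorProduct.assoc ℂ H H H).toLinearMap)

/-- A normalized convolution-invertible 2-cocycle functional on a Hopf algebra `H`. -/
structure IsNormalizedCocycle (ω : H ⊗[ℂ] H →ₗ[ℂ] ℂ) : Prop where
  conv_invertible : ∃ ω' : H ⊗[ℂ] H →ₗ[ℂ] ℂ,
    conv ω ω' = Coalgebra.counit ∧ conv ω' ω = Coalgebra.counit
  cocycle : cocycleLHS ω = cocycleRHS ω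
  normal_right : ∀ g : H, ω (g ⊗ₜ[ℂ] 1) = Coalgebra.counit g
  normal_left : ∀ g : H, ω ((1 : H) ⊗ₜ[ℂ] g) = Coalgebra.counit g

/-- A 2-cocycle functional, viewed as a map `H ⊗ H →ₗ H` with scalar values. -/
def toScalarMap (ω : H ⊗[ℂ] H →ₗ[ℂ] ℂ) : H ⊗[ℂ] H →ₗ[ℂ] H :=
  Algebra.linearMap ℂ H ∘ₗ ω

/-- The twisted product `h · g = ω(h₍₁₎,g₍₁₎) h₍₂₎g₍₂₎ χ'(h₍₃₎,g₍₃₎)` of `ₒH_{χ'}`,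
expressed as the convolution `ω ∗ m ∗ χ'` of maps `H ⊗ H →ₗ H`. -/
def twistedMul (ω χ' : H ⊗[ℂ] H →ₗ[ℂ] ℂ) : H ⊗[ℂ] H →ₗ[ℂ] H :=
  conv (conv (toScalarMap ω) (LinearMap.mul' ℂ H)) (toScalarMap χ')

lemma TensorProduct.instCoalgebraStruct_comul {A B : Type}
    [AddCommGroup A] [Module ℂ A] [Coalgebra ℂ A] [AddCommGroup B] [Module ℂ B] [Coalgebra ℂ B] :
    (Coalgebra.comul : A ⊗[ℂ] B →ₗ[ℂ] (A ⊗[ℂ] B) ⊗[ℂ] (A ⊗[ℂ] B))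
      = (TensorProduct.tensorTensorTensorComm ℂ A A B B).toLinearMap ∘ₗ
        TensorProduct.map Coalgebra.comul Coalgebra.comul := by
  ext x y; rfl

lemma TensorProduct.instCoalgebraStruct_counit {A B : Type}
    [AddCommGroup A] [Module ℂ A] [Coalgebra ℂ A] [AddCommGroup B] [Module ℂ B] [Coalgebra ℂ B] :
    (Coalgebra.counit : A ⊗[ℂ] B →ₗ[ℂ] ℂ)
      = LinearMap.mul' ℂ ℂ ∘ₗ TensorProduct.map Coalgebra.counit Coalgebra.counit := by
  ext x y; simp [mul_comm]

section ConvLemmas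
open Coalgebra LinearMap
variable {C C' D D' A B : Type}
  [AddCommGroup C] [Module ℂ C] [Coalgebra ℂ C]
  [AddCommGroup C'] [Module ℂ C'] [Coalgebra ℂ C']
  [AddCommGroup D] [Module ℂ D] [Coalgebra ℂ D]
  [AddCommGroup D'] [Module ℂ D'] [Coalgebra ℂ D']
  [Ring A] [Algebra ℂ A] [Ring B] [Algebra ℂ B]

/-- the convolution unit -/
def cunit : C →ₗ[ℂ] A := Algebra.linearMap ℂ A ∘ₗ Coalgebra.counit

lemma conv_one_left (f : C →ₗ[ℂ] A) : conv cunit f = f := by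
  unfold conv cunit
  rw [show TensorProduct.map (Algebra.linearMap ℂ A ∘ₗ (counit : C →ₗ[ℂ] ℂ)) f
      = (TensorProduct.map (Algebra.linearMap ℂ A) f) ∘ₗ
        (TensorProduct.map counit LinearMap.id) by
    rw [← TensorProduct.map_comp]; simp]
  rw [LinearMap.comp_assoc, show (TensorProduct.map (counit : C →ₗ[ℂ] ℂ) LinearMap.id) ∘ₗ
      (comul : C →ₗ[ℂ] C ⊗[ℂ] C) = TensorProduct.mk ℂ ℂ C 1 from
    Coalgebra.rTensor_counit_comp_comul]
  ext c
  simp [Algebra.smul_def]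

lemma conv_one_right (f : C →ₗ[ℂ] A) : conv f cunit = f := by
  unfold conv cunit
  rw [show TensorProduct.map f (Algebra.linearMap ℂ A ∘ₗ (counit : C →ₗ[ℂ] ℂ))
      = (TensorProduct.map f (Algebra.linearMap ℂ A)) ∘ₗ
        (TensorProduct.map LinearMap.id counit) by
    rw [← TensorProduct.map_comp]; simp]
  rw [LinearMap.comp_assoc, show (TensorProduct.map LinearMap.id (counit : C →ₗ[ℂ] ℂ)) ∘ₗ
      (comul : C →ₗ[ℂ] C ⊗[ℂ] C) = (TensorProduct.mk ℂ C ℂ).flip 1 from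
    Coalgebra.lTensor_counit_comp_comul]
  ext c
  simp [Algebra.smul_def, Algebra.commutes]

lemma cunit_eq_counit : (cunit : C →ₗ[ℂ] ℂ) = Coalgebra.counit := by
  unfold cunit; ext; simp

lemma conv_counit_left (f : C →ₗ[ℂ] ℂ) : conv Coalgebra.counit f = f := by
  rw [← cunit_eq_counit, conv_one_left]

lemma conv_counit_right (f : C →ₗ[ℂ] ℂ) : conv f Coalgebra.counit = f := by
  rw [← cunit_eq_counit, conv_one_right]

lemma conv_assoc (f g h : C →ₗ[ℂ] A) : conv (conv f g) h = conv f (conv g h) := by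
  unfold conv
  have e1 : TensorProduct.map (LinearMap.mul' ℂ A ∘ₗ TensorProduct.map f g ∘ₗ comul) h
      = TensorProduct.map (LinearMap.mul' ℂ A ∘ₗ TensorProduct.map f g) h ∘ₗ
        (comul : C →ₗ[ℂ] C ⊗[ℂ] C).rTensor C := by
    ext x y; simp [LinearMap.rTensor]
  have e2 : TensorProduct.map f (LinearMap.mul' ℂ A ∘ₗ TensorProduct.map g h ∘ₗ comul)
      = TensorProduct.map f (LinearMap.mul' ℂ A ∘ₗ TensorProduct.map g h) ∘ₗ
        (comul : C →ₗ[ℂ] C ⊗[ℂ] C).lTensor C := by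
    ext x y; simp [LinearMap.lTensor]
  rw [e1, e2]
  have coa : ((comul : C →ₗ[ℂ] C ⊗[ℂ] C).rTensor C) ∘ₗ (comul : C →ₗ[ℂ] C ⊗[ℂ] C)
      = (TensorProduct.assoc ℂ C C C).symm.toLinearMap ∘ₗ
        ((comul : C →ₗ[ℂ] C ⊗[ℂ] C).lTensor C) ∘ₗ comul := by
    rw [← Coalgebra.coassoc_symm]
  calc LinearMap.mul' ℂ A ∘ₗ (TensorProduct.map (LinearMap.mul' ℂ A ∘ₗ TensorProduct.map f g) h ∘ₗ
        (comul : C →ₗ[ℂ] C ⊗[ℂ] C).rTensor C) ∘ₗ comul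
      = (LinearMap.mul' ℂ A ∘ₗ TensorProduct.map (LinearMap.mul' ℂ A ∘ₗ TensorProduct.map f g) h) ∘ₗ
        ((comul : C →ₗ[ℂ] C ⊗[ℂ] C).rTensor C ∘ₗ comul) := by
        simp only [LinearMap.comp_assoc]
    _ = (LinearMap.mul' ℂ A ∘ₗ TensorProduct.map (LinearMap.mul' ℂ A ∘ₗ TensorProduct.map f g) h) ∘ₗ
        (TensorProduct.assoc ℂ C C C).symm.toLinearMap ∘ₗ
        ((comul : C →ₗ[ℂ] C ⊗[ℂ] C).lTensor C ∘ₗ comul) := by rw [coa]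
    _ = ((LinearMap.mul' ℂ A ∘ₗ TensorProduct.map (LinearMap.mul' ℂ A ∘ₗ TensorProduct.map f g) h) ∘ₗ
        (TensorProduct.assoc ℂ C C C).symm.toLinearMap) ∘ₗ
        ((comul : C →ₗ[ℂ] C ⊗[ℂ] C).lTensor C) ∘ₗ comul := by simp only [LinearMap.comp_assoc]
    _ = (LinearMap.mul' ℂ A ∘ₗ TensorProduct.map f (LinearMap.mul' ℂ A ∘ₗ TensorProduct.map g h)) ∘ₗ
        ((comul : C →ₗ[ℂ] C ⊗[ℂ] C).lTensor C) ∘ₗ comul := by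
        congr 1
        ext x y z
        simp [LinearMap.rTensor, LinearMap.lTensor, mul_assoc]
    _ = LinearMap.mul' ℂ A ∘ₗ (TensorProduct.map f (LinearMap.mul' ℂ A ∘ₗ TensorProduct.map g h) ∘ₗ
        (comul : C →ₗ[ℂ] C ⊗[ℂ] C).lTensor C) ∘ₗ comul := by simp only [LinearMap.comp_assoc]

/-- pullback along a comul-compatible map distributes over conv -/
lemma conv_comp {α : D →ₗ[ℂ] C} (hα : comul ∘ₗ α = TensorProduct.map α α ∘ₗ comul)
    (f g : C →ₗ[ℂ] A) : (conv f g) ∘ₗ α = conv (f ∘ₗ α) (g ∘ₗ α) := by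
  unfold conv
  rw [LinearMap.comp_assoc, LinearMap.comp_assoc, hα,
    show TensorProduct.map (f ∘ₗ α) (g ∘ₗ α) = TensorProduct.map f g ∘ₗ TensorProduct.map α α
      from TensorProduct.map_comp ..]
  simp only [LinearMap.comp_assoc]

/-- postcomposition with a multiplicative linear map distributes over conv -/
lemma comp_conv {β : A →ₗ[ℂ] B}
    (hβ : β ∘ₗ LinearMap.mul' ℂ A = LinearMap.mul' ℂ B ∘ₗ TensorProduct.map β β)
    (f g : C →ₗ[ℂ] A) : β ∘ₗ conv f g = conv (β ∘ₗ f) (β ∘ₗ g) := by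
  unfold conv
  rw [← LinearMap.comp_assoc, ← LinearMap.comp_assoc, hβ,
    show TensorProduct.map (β ∘ₗ f) (β ∘ₗ g) = TensorProduct.map β β ∘ₗ TensorProduct.map f g
      from TensorProduct.map_comp ..]
  simp only [LinearMap.comp_assoc]

/-- tensor of convolutions -/
lemma map_conv (f g : C →ₗ[ℂ] A) (p q : D →ₗ[ℂ] B) :
    TensorProduct.map (conv f g) (conv p q)
      = conv (TensorProduct.map f p) (TensorProduct.map g q) := by
  unfold conv
  have e1 : TensorProduct.map (LinearMap.mul' ℂ A ∘ₗ TensorProduct.map f g ∘ₗ comul)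
      (LinearMap.mul' ℂ B ∘ₗ TensorProduct.map p q ∘ₗ comul)
      = (TensorProduct.map (LinearMap.mul' ℂ A ∘ₗ TensorProduct.map f g)
          (LinearMap.mul' ℂ B ∘ₗ TensorProduct.map p q)) ∘ₗ
        TensorProduct.map (comul : C →ₗ[ℂ] C ⊗[ℂ] C) (comul : D →ₗ[ℂ] D ⊗[ℂ] D) := by
    rw [← TensorProduct.map_comp]
    simp only [LinearMap.comp_assoc]
  rw [e1, TensorProduct.instCoalgebraStruct_comul (A := C) (B := D)]
  have e2 : (LinearMap.mul' ℂ (A ⊗[ℂ] B) ∘ₗ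
        TensorProduct.map (TensorProduct.map f p) (TensorProduct.map g q)) ∘ₗ
        (tensorTensorTensorComm ℂ C C D D : (C ⊗[ℂ] C) ⊗[ℂ] (D ⊗[ℂ] D) →ₗ[ℂ] _)
      = TensorProduct.map (LinearMap.mul' ℂ A ∘ₗ TensorProduct.map f g)
          (LinearMap.mul' ℂ B ∘ₗ TensorProduct.map p q) := by
    ext x y z w
    simp [Algebra.TensorProduct.tmul_mul_tmul]
  rw [← e2]
  simp only [LinearMap.comp_assoc]

/-- scalar-valued maps pull through any linear map, left -/
lemma comp_conv_scalar_left (f : A →ₗ[ℂ] B) (φ : C →ₗ[ℂ] ℂ) (F : C →ₗ[ℂ] A) :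
    f ∘ₗ conv (Algebra.linearMap ℂ A ∘ₗ φ) F = conv (Algebra.linearMap ℂ B ∘ₗ φ) (f ∘ₗ F) := by
  unfold conv
  simp only [← LinearMap.comp_assoc]
  congr 1
  ext x y
  show f ((algebraMap ℂ A) (φ x) * F y) = (algebraMap ℂ B) (φ x) * f (F y)
  rw [← Algebra.smul_def, ← Algebra.smul_def, map_smul]

lemma comp_conv_scalar_right (f : A →ₗ[ℂ] B) (φ : C →ₗ[ℂ] ℂ) (F : C →ₗ[ℂ] A) :
    f ∘ₗ conv F (Algebra.linearMap ℂ A ∘ₗ φ) = conv (f ∘ₗ F) (Algebra.linearMap ℂ B ∘ₗ φ) := by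
  unfold conv
  simp only [← LinearMap.comp_assoc]
  congr 1
  ext x y
  show f (F x * (algebraMap ℂ A) (φ y)) = f (F x) * (algebraMap ℂ B) (φ y)
  rw [← Algebra.commutes, ← Algebra.commutes, ← Algebra.smul_def, ← Algebra.smul_def, map_smul]

lemma algebraMap_mul'_comp :
    (Algebra.linearMap ℂ A) ∘ₗ LinearMap.mul' ℂ ℂ
      = LinearMap.mul' ℂ A ∘ₗ
        TensorProduct.map (Algebra.linearMap ℂ A) (Algebra.linearMap ℂ A) := by
  ext; simp

lemma mul'_mul'_comp :
    (LinearMap.mul' ℂ ℂ) ∘ₗ LinearMap.mul' ℂ (ℂ ⊗[ℂ] ℂ)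
      = LinearMap.mul' ℂ ℂ ∘ₗ TensorProduct.map (LinearMap.mul' ℂ ℂ) (LinearMap.mul' ℂ ℂ) := by
  ext
  simp [Algebra.TensorProduct.tmul_mul_tmul]

/-- convolution of "tensor" scalar functionals -/
lemma conv_map_scalar (φ φ' : C →ₗ[ℂ] ℂ) (ψ ψ' : D →ₗ[ℂ] ℂ) :
    conv (LinearMap.mul' ℂ ℂ ∘ₗ TensorProduct.map φ ψ)
        (LinearMap.mul' ℂ ℂ ∘ₗ TensorProduct.map φ' ψ')
      = LinearMap.mul' ℂ ℂ ∘ₗ TensorProduct.map (conv φ φ') (conv ψ ψ') := by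
  rw [map_conv, comp_conv mul'_mul'_comp]

end ConvLemmas

section Compat
open Coalgebra LinearMap
variable {C C' D D' : Type}
  [AddCommGroup C] [Module ℂ C] [Coalgebra ℂ C]
  [AddCommGroup C'] [Module ℂ C'] [Coalgebra ℂ C']
  [AddCommGroup D] [Module ℂ D] [Coalgebra ℂ D]
  [AddCommGroup D'] [Module ℂ D'] [Coalgebra ℂ D']
variable {H : Type} [Ring H] [Bialgebra ℂ H]

lemma compat_map {α : C →ₗ[ℂ] C'} {β : D →ₗ[ℂ] D'}
    (hα : comul ∘ₗ α = TensorProduct.map α α ∘ₗ comul)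
    (hβ : comul ∘ₗ β = TensorProduct.map β β ∘ₗ comul) :
    comul ∘ₗ TensorProduct.map α β
      = TensorProduct.map (TensorProduct.map α β) (TensorProduct.map α β) ∘ₗ comul := by
  rw [TensorProduct.instCoalgebraStruct_comul (A := C) (B := D),
    TensorProduct.instCoalgebraStruct_comul (A := C') (B := D')]
  have key : (tensorTensorTensorComm ℂ C' C' D' D' : (C' ⊗[ℂ] C') ⊗[ℂ] (D' ⊗[ℂ] D') →ₗ[ℂ] _) ∘ₗ
        TensorProduct.map (TensorProduct.map α α) (TensorProduct.map β β)
      = TensorProduct.map (TensorProduct.map α β) (TensorProduct.map α β) ∘ₗ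
        (tensorTensorTensorComm ℂ C C D D : (C ⊗[ℂ] C) ⊗[ℂ] (D ⊗[ℂ] D) →ₗ[ℂ] (C ⊗[ℂ] D) ⊗[ℂ] (C ⊗[ℂ] D)) := by
    ext; simp
  have mid : TensorProduct.map (comul : C' →ₗ[ℂ] C' ⊗[ℂ] C') (comul : D' →ₗ[ℂ] D' ⊗[ℂ] D') ∘ₗ
        TensorProduct.map α β
      = TensorProduct.map (TensorProduct.map α α) (TensorProduct.map β β) ∘ₗ
        TensorProduct.map (comul : C →ₗ[ℂ] C ⊗[ℂ] C) (comul : D →ₗ[ℂ] D ⊗[ℂ] D) := by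
    rw [← TensorProduct.map_comp, hα, hβ, TensorProduct.map_comp]
  rw [LinearMap.comp_assoc, mid, ← LinearMap.comp_assoc, key, LinearMap.comp_assoc]

lemma mul'_tensor : LinearMap.mul' ℂ (H ⊗[ℂ] H)
    = TensorProduct.map (LinearMap.mul' ℂ H) (LinearMap.mul' ℂ H) ∘ₗ
      (tensorTensorTensorComm ℂ H H H H : (H ⊗[ℂ] H) ⊗[ℂ] (H ⊗[ℂ] H) →ₗ[ℂ] _) := by
  ext
  simp [Algebra.TensorProduct.tmul_mul_tmul]

lemma compat_mul : comul ∘ₗ LinearMap.mul' ℂ H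
    = TensorProduct.map (LinearMap.mul' ℂ H) (LinearMap.mul' ℂ H) ∘ₗ
      (comul : H ⊗[ℂ] H →ₗ[ℂ] (H ⊗[ℂ] H) ⊗[ℂ] (H ⊗[ℂ] H)) := by
  rw [TensorProduct.instCoalgebraStruct_comul (A := H) (B := H), ← LinearMap.comp_assoc,
    ← _root_.mul'_tensor]
  ext h g
  simp

lemma compat_id : comul ∘ₗ (LinearMap.id : C →ₗ[ℂ] C)
    = TensorProduct.map LinearMap.id LinearMap.id ∘ₗ comul := by
  simp [TensorProduct.map_id]

lemma compat_assoc :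
    comul ∘ₗ (TensorProduct.assoc ℂ C D D').toLinearMap
      = TensorProduct.map (TensorProduct.assoc ℂ C D D').toLinearMap
          (TensorProduct.assoc ℂ C D D').toLinearMap ∘ₗ comul := by
  have hL : (comul : C ⊗[ℂ] (D ⊗[ℂ] D') →ₗ[ℂ] _)
      = (tensorTensorTensorComm ℂ C C (D ⊗[ℂ] D') (D ⊗[ℂ] D') : (C ⊗[ℂ] C) ⊗[ℂ] ((D ⊗[ℂ] D') ⊗[ℂ] (D ⊗[ℂ] D')) →ₗ[ℂ] (C ⊗[ℂ] (D ⊗[ℂ] D')) ⊗[ℂ] (C ⊗[ℂ] (D ⊗[ℂ] D'))) ∘ₗ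
          TensorProduct.map (LinearMap.id : C ⊗[ℂ] C →ₗ[ℂ] C ⊗[ℂ] C) (tensorTensorTensorComm ℂ D D D' D' : (D ⊗[ℂ] D) ⊗[ℂ] (D' ⊗[ℂ] D') →ₗ[ℂ] (D ⊗[ℂ] D') ⊗[ℂ] (D ⊗[ℂ] D')) ∘ₗ
        TensorProduct.map (comul : C →ₗ[ℂ] C ⊗[ℂ] C)
          (TensorProduct.map (comul : D →ₗ[ℂ] D ⊗[ℂ] D) (comul : D' →ₗ[ℂ] D' ⊗[ℂ] D')) := by
    rw [TensorProduct.instCoalgebraStruct_comul (A := C) (B := D ⊗[ℂ] D'),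
        TensorProduct.instCoalgebraStruct_comul (A := D) (B := D'),
        show TensorProduct.map (comul : C →ₗ[ℂ] C ⊗[ℂ] C)
            ((tensorTensorTensorComm ℂ D D D' D' : (D ⊗[ℂ] D) ⊗[ℂ] (D' ⊗[ℂ] D') →ₗ[ℂ] (D ⊗[ℂ] D') ⊗[ℂ] (D ⊗[ℂ] D')) ∘ₗ
              TensorProduct.map (comul : D →ₗ[ℂ] D ⊗[ℂ] D) (comul : D' →ₗ[ℂ] D' ⊗[ℂ] D'))
          = TensorProduct.map (LinearMap.id : C ⊗[ℂ] C →ₗ[ℂ] C ⊗[ℂ] C) (tensorTensorTensorComm ℂ D D D' D' : (D ⊗[ℂ] D) ⊗[ℂ] (D' ⊗[ℂ] D') →ₗ[ℂ] (D ⊗[ℂ] D') ⊗[ℂ] (D ⊗[ℂ] D')) ∘ₗ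
            TensorProduct.map (comul : C →ₗ[ℂ] C ⊗[ℂ] C)
              (TensorProduct.map (comul : D →ₗ[ℂ] D ⊗[ℂ] D) (comul : D' →ₗ[ℂ] D' ⊗[ℂ] D')) from by
          rw [← TensorProduct.map_comp]; simp]
  have hR : (comul : (C ⊗[ℂ] D) ⊗[ℂ] D' →ₗ[ℂ] _)
      = (tensorTensorTensorComm ℂ (C ⊗[ℂ] D) (C ⊗[ℂ] D) D' D' : ((C ⊗[ℂ] D) ⊗[ℂ] (C ⊗[ℂ] D)) ⊗[ℂ] (D' ⊗[ℂ] D') →ₗ[ℂ] ((C ⊗[ℂ] D) ⊗[ℂ] D') ⊗[ℂ] ((C ⊗[ℂ] D) ⊗[ℂ] D')) ∘ₗ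
          TensorProduct.map (tensorTensorTensorComm ℂ C C D D : (C ⊗[ℂ] C) ⊗[ℂ] (D ⊗[ℂ] D) →ₗ[ℂ] (C ⊗[ℂ] D) ⊗[ℂ] (C ⊗[ℂ] D)) (LinearMap.id : D' ⊗[ℂ] D' →ₗ[ℂ] D' ⊗[ℂ] D') ∘ₗ
        TensorProduct.map
          (TensorProduct.map (comul : C →ₗ[ℂ] C ⊗[ℂ] C) (comul : D →ₗ[ℂ] D ⊗[ℂ] D)) (comul : D' →ₗ[ℂ] D' ⊗[ℂ] D') := by
    rw [TensorProduct.instCoalgebraStruct_comul (A := C ⊗[ℂ] D) (B := D'),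
        TensorProduct.instCoalgebraStruct_comul (A := C) (B := D),
        show TensorProduct.map
            ((tensorTensorTensorComm ℂ C C D D : (C ⊗[ℂ] C) ⊗[ℂ] (D ⊗[ℂ] D) →ₗ[ℂ] (C ⊗[ℂ] D) ⊗[ℂ] (C ⊗[ℂ] D)) ∘ₗ
              TensorProduct.map (comul : C →ₗ[ℂ] C ⊗[ℂ] C) (comul : D →ₗ[ℂ] D ⊗[ℂ] D)) (comul : D' →ₗ[ℂ] D' ⊗[ℂ] D')
          = TensorProduct.map (tensorTensorTensorComm ℂ C C D D : (C ⊗[ℂ] C) ⊗[ℂ] (D ⊗[ℂ] D) →ₗ[ℂ] (C ⊗[ℂ] D) ⊗[ℂ] (C ⊗[ℂ] D)) (LinearMap.id : D' ⊗[ℂ] D' →ₗ[ℂ] D' ⊗[ℂ] D') ∘ₗ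
            TensorProduct.map
              (TensorProduct.map (comul : C →ₗ[ℂ] C ⊗[ℂ] C) (comul : D →ₗ[ℂ] D ⊗[ℂ] D)) (comul : D' →ₗ[ℂ] D' ⊗[ℂ] D')
          from by rw [← TensorProduct.map_comp]; simp]
  rw [hL, hR]
  simp only [LinearMap.comp_assoc]
  rw [TensorProduct.map_map_comp_assoc_eq]
  simp only [← LinearMap.comp_assoc]
  congr 1
  ext
  simp

lemma compat_mk_one : comul ∘ₗ TensorProduct.mk ℂ H H 1
    = TensorProduct.map (TensorProduct.mk ℂ H H 1) (TensorProduct.mk ℂ H H 1) ∘ₗ comul := by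
  have aux : (tensorTensorTensorComm ℂ H H H H : (H ⊗[ℂ] H) ⊗[ℂ] (H ⊗[ℂ] H) →ₗ[ℂ] _) ∘ₗ
        TensorProduct.mk ℂ (H ⊗[ℂ] H) (H ⊗[ℂ] H) ((1 : H) ⊗ₜ[ℂ] (1 : H))
      = TensorProduct.map (TensorProduct.mk ℂ H H 1) (TensorProduct.mk ℂ H H 1) := by
    ext; simp
  apply LinearMap.ext; intro h
  have : (comul : H ⊗[ℂ] H →ₗ[ℂ] _) ((1 : H) ⊗ₜ[ℂ] h)
      = (tensorTensorTensorComm ℂ H H H H) (((1:H) ⊗ₜ[ℂ] (1:H)) ⊗ₜ[ℂ] (comul h)) := by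
    rw [TensorProduct.instCoalgebraStruct_comul (A := H) (B := H)]
    simp [Bialgebra.comul_one, Algebra.TensorProduct.one_def]
  simp only [LinearMap.comp_apply, TensorProduct.mk_apply, this]
  exact DFunLike.congr_fun aux (Coalgebra.comul h) |>.symm ▸ rfl

lemma compat_mk_one' : comul ∘ₗ (TensorProduct.mk ℂ H H).flip 1
    = TensorProduct.map ((TensorProduct.mk ℂ H H).flip 1) ((TensorProduct.mk ℂ H H).flip 1) ∘ₗ comul := by
  have aux : (tensorTensorTensorComm ℂ H H H H : (H ⊗[ℂ] H) ⊗[ℂ] (H ⊗[ℂ] H) →ₗ[ℂ] _) ∘ₗ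
        (TensorProduct.mk ℂ (H ⊗[ℂ] H) (H ⊗[ℂ] H)).flip ((1 : H) ⊗ₜ[ℂ] (1 : H))
      = TensorProduct.map ((TensorProduct.mk ℂ H H).flip 1) ((TensorProduct.mk ℂ H H).flip 1) := by
    ext; simp
  apply LinearMap.ext; intro h
  have : (comul : H ⊗[ℂ] H →ₗ[ℂ] _) (h ⊗ₜ[ℂ] (1 : H))
      = (tensorTensorTensorComm ℂ H H H H) ((comul h) ⊗ₜ[ℂ] ((1:H) ⊗ₜ[ℂ] (1:H))) := by
    rw [TensorProduct.instCoalgebraStruct_comul (A := H) (B := H)]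
    simp [Bialgebra.comul_one, Algebra.TensorProduct.one_def]
  simp only [LinearMap.comp_apply, TensorProduct.mk_apply, this, LinearMap.flip_apply]
  exact DFunLike.congr_fun aux (Coalgebra.comul h) |>.symm ▸ rfl

end Compat

section CompatComp
open Coalgebra LinearMap
variable {C C' D : Type}
  [AddCommGroup C] [Module ℂ C] [Coalgebra ℂ C]
  [AddCommGroup C'] [Module ℂ C'] [Coalgebra ℂ C']
  [AddCommGroup D] [Module ℂ D] [Coalgebra ℂ D]

lemma compat_comp {α : C →ₗ[ℂ] C'} {α' : D →ₗ[ℂ] C}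
    (hα : comul ∘ₗ α = TensorProduct.map α α ∘ₗ comul)
    (hα' : comul ∘ₗ α' = TensorProduct.map α' α' ∘ₗ comul) :
    comul ∘ₗ (α ∘ₗ α') = TensorProduct.map (α ∘ₗ α') (α ∘ₗ α') ∘ₗ comul := by
  rw [show TensorProduct.map (α ∘ₗ α') (α ∘ₗ α')
      = TensorProduct.map α α ∘ₗ TensorProduct.map α' α' from TensorProduct.map_comp ..,
    ← LinearMap.comp_assoc, hα, LinearMap.comp_assoc, hα']
  simp only [LinearMap.comp_assoc]
end CompatComp

section MainAux
open Coalgebra LinearMap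

-- small H-specific lemmas
lemma scalarG (φ : H ⊗[ℂ] H →ₗ[ℂ] ℂ) :
    TensorProduct.map (Algebra.linearMap ℂ H ∘ₗ φ) (cunit : H →ₗ[ℂ] H)
      = Algebra.linearMap ℂ (H ⊗[ℂ] H) ∘ₗ
        (LinearMap.mul' ℂ ℂ ∘ₗ TensorProduct.map φ Coalgebra.counit) := by
  ext x y z
  simp [cunit, Algebra.TensorProduct.one_def, Algebra.algebraMap_eq_smul_one,
    TensorProduct.smul_tmul, smul_smul, mul_comm]

lemma scalarG' (φ : H ⊗[ℂ] H →ₗ[ℂ] ℂ) :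
    TensorProduct.map (cunit : H →ₗ[ℂ] H) (Algebra.linearMap ℂ H ∘ₗ φ)
      = Algebra.linearMap ℂ (H ⊗[ℂ] H) ∘ₗ
        (LinearMap.mul' ℂ ℂ ∘ₗ TensorProduct.map Coalgebra.counit φ) := by
  ext x y z
  simp [cunit, Algebra.TensorProduct.one_def, Algebra.algebraMap_eq_smul_one,
    TensorProduct.smul_tmul, smul_smul, mul_comm]

lemma counit_alpha : (Coalgebra.counit : H ⊗[ℂ] H →ₗ[ℂ] ℂ) ∘ₗ
    TensorProduct.map (LinearMap.mul' ℂ H) (LinearMap.id : H →ₗ[ℂ] H)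
    = (Coalgebra.counit : (H ⊗[ℂ] H) ⊗[ℂ] H →ₗ[ℂ] ℂ) := by
  ext x y z; simp [mul_assoc, mul_comm, mul_left_comm]

lemma counit_gamma : (Coalgebra.counit : H ⊗[ℂ] H →ₗ[ℂ] ℂ) ∘ₗ
    TensorProduct.map (LinearMap.id : H →ₗ[ℂ] H) (LinearMap.mul' ℂ H) ∘ₗ
      (TensorProduct.assoc ℂ H H H).toLinearMap
    = (Coalgebra.counit : (H ⊗[ℂ] H) ⊗[ℂ] H →ₗ[ℂ] ℂ) := by
  ext x y z; simp [mul_assoc, mul_comm, mul_left_comm]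

lemma counit_asc : (Coalgebra.counit : H ⊗[ℂ] (H ⊗[ℂ] H) →ₗ[ℂ] ℂ) ∘ₗ
    (TensorProduct.assoc ℂ H H H).toLinearMap
    = (Coalgebra.counit : (H ⊗[ℂ] H) ⊗[ℂ] H →ₗ[ℂ] ℂ) := by
  ext x y z; simp [mul_assoc]

lemma N3_asc : LinearMap.mul' ℂ H ∘ₗ
    TensorProduct.map (LinearMap.id : H →ₗ[ℂ] H) (LinearMap.mul' ℂ H) ∘ₗ
      (TensorProduct.assoc ℂ H H H).toLinearMap
    = LinearMap.mul' ℂ H ∘ₗ TensorProduct.map (LinearMap.mul' ℂ H) (LinearMap.id : H →ₗ[ℂ] H) := by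
  ext x y z; simp [mul_assoc]

lemma counit_T_eq : (Coalgebra.counit : (H ⊗[ℂ] H) ⊗[ℂ] H →ₗ[ℂ] ℂ)
    = LinearMap.mul' ℂ ℂ ∘ₗ
      TensorProduct.map (Coalgebra.counit : H ⊗[ℂ] H →ₗ[ℂ] ℂ) Coalgebra.counit :=
  TensorProduct.instCoalgebraStruct_counit

lemma counit_T'_eq : (Coalgebra.counit : H ⊗[ℂ] (H ⊗[ℂ] H) →ₗ[ℂ] ℂ)
    = LinearMap.mul' ℂ ℂ ∘ₗ
      TensorProduct.map (Coalgebra.counit : H →ₗ[ℂ] ℂ)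
        (Coalgebra.counit : H ⊗[ℂ] H →ₗ[ℂ] ℂ) :=
  TensorProduct.instCoalgebraStruct_counit

lemma mul'_mk_one : LinearMap.mul' ℂ H ∘ₗ TensorProduct.mk ℂ H H 1 = LinearMap.id := by
  ext h; simp

lemma mul'_mk_one' : LinearMap.mul' ℂ H ∘ₗ (TensorProduct.mk ℂ H H).flip 1 = LinearMap.id := by
  ext h; simp

lemma counit_mk_one : (Coalgebra.counit : H ⊗[ℂ] H →ₗ[ℂ] ℂ) ∘ₗ TensorProduct.mk ℂ H H 1
    = Coalgebra.counit := by
  ext h; simp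

lemma counit_mk_one' : (Coalgebra.counit : H ⊗[ℂ] H →ₗ[ℂ] ℂ) ∘ₗ (TensorProduct.mk ℂ H H).flip 1
    = Coalgebra.counit := by
  ext h; simp

/-- pull back the twisted multiplication along a comul-compatible map -/
lemma twisted_pull {T' : Type} [AddCommGroup T'] [Module ℂ T'] [Coalgebra ℂ T']
    (ω χ' : H ⊗[ℂ] H →ₗ[ℂ] ℂ) {α : T' →ₗ[ℂ] H ⊗[ℂ] H}
    (hα : comul ∘ₗ α = TensorProduct.map α α ∘ₗ comul) :
    twistedMul ω χ' ∘ₗ α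
      = conv (conv (Algebra.linearMap ℂ H ∘ₗ ω ∘ₗ α) (LinearMap.mul' ℂ H ∘ₗ α))
          (Algebra.linearMap ℂ H ∘ₗ χ' ∘ₗ α) := by
  unfold twistedMul toScalarMap
  rw [conv_comp hα, conv_comp hα]
  simp only [LinearMap.comp_assoc]

/-- the inverse-cocycle tail identity -/
lemma tail_eq (χ χ' : H ⊗[ℂ] H →ₗ[ℂ] ℂ)
    (hχc : cocycleLHS χ = cocycleRHS χ)
    (h1 : conv χ χ' = Coalgebra.counit) (h2 : conv χ' χ = Coalgebra.counit) :
    conv (χ' ∘ₗ TensorProduct.map (LinearMap.mul' ℂ H) LinearMap.id)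
        (LinearMap.mul' ℂ ℂ ∘ₗ TensorProduct.map χ' Coalgebra.counit)
      = conv (χ' ∘ₗ TensorProduct.map LinearMap.id (LinearMap.mul' ℂ H) ∘ₗ
            (TensorProduct.assoc ℂ H H H).toLinearMap)
          (LinearMap.mul' ℂ ℂ ∘ₗ TensorProduct.map Coalgebra.counit χ' ∘ₗ
            (TensorProduct.assoc ℂ H H H).toLinearMap) := by
  have hα := compat_map (compat_mul (H := H)) (compat_id (C := H))
  have hβ := compat_map (compat_id (C := H)) (compat_mul (H := H))
  have hasc := compat_assoc (C := H) (D := H) (D' := H)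
  have hγ := compat_comp hβ hasc
  -- two-sided inverse facts
  have hP'P : conv (χ' ∘ₗ TensorProduct.map (LinearMap.mul' ℂ H) LinearMap.id)
      (χ ∘ₗ TensorProduct.map (LinearMap.mul' ℂ H) LinearMap.id)
      = (Coalgebra.counit : (H ⊗[ℂ] H) ⊗[ℂ] H →ₗ[ℂ] ℂ) := by
    rw [← conv_comp hα, h2, counit_alpha]
  have hQ'Q : conv (LinearMap.mul' ℂ ℂ ∘ₗ TensorProduct.map χ' Coalgebra.counit)
      (LinearMap.mul' ℂ ℂ ∘ₗ TensorProduct.map χ Coalgebra.counit)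
      = (Coalgebra.counit : (H ⊗[ℂ] H) ⊗[ℂ] H →ₗ[ℂ] ℂ) := by
    rw [conv_map_scalar, h2, conv_counit_left, ← counit_T_eq]
  have hSS' : conv (χ ∘ₗ TensorProduct.map LinearMap.id (LinearMap.mul' ℂ H) ∘ₗ
        (TensorProduct.assoc ℂ H H H).toLinearMap)
      (χ' ∘ₗ TensorProduct.map LinearMap.id (LinearMap.mul' ℂ H) ∘ₗ
        (TensorProduct.assoc ℂ H H H).toLinearMap)
      = (Coalgebra.counit : (H ⊗[ℂ] H) ⊗[ℂ] H →ₗ[ℂ] ℂ) := by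
    rw [show χ ∘ₗ TensorProduct.map LinearMap.id (LinearMap.mul' ℂ H) ∘ₗ
        (TensorProduct.assoc ℂ H H H).toLinearMap
        = χ ∘ₗ (TensorProduct.map LinearMap.id (LinearMap.mul' ℂ H) ∘ₗ
          (TensorProduct.assoc ℂ H H H).toLinearMap) from rfl,
      show χ' ∘ₗ TensorProduct.map LinearMap.id (LinearMap.mul' ℂ H) ∘ₗ
        (TensorProduct.assoc ℂ H H H).toLinearMap
        = χ' ∘ₗ (TensorProduct.map LinearMap.id (LinearMap.mul' ℂ H) ∘ₗ
          (TensorProduct.assoc ℂ H H H).toLinearMap) from rfl,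
      ← conv_comp hγ, h1, counit_gamma]
  have hRR' : conv (LinearMap.mul' ℂ ℂ ∘ₗ TensorProduct.map Coalgebra.counit χ ∘ₗ
        (TensorProduct.assoc ℂ H H H).toLinearMap)
      (LinearMap.mul' ℂ ℂ ∘ₗ TensorProduct.map Coalgebra.counit χ' ∘ₗ
        (TensorProduct.assoc ℂ H H H).toLinearMap)
      = (Coalgebra.counit : (H ⊗[ℂ] H) ⊗[ℂ] H →ₗ[ℂ] ℂ) := by
    have e : conv ((LinearMap.mul' ℂ ℂ ∘ₗ TensorProduct.map Coalgebra.counit χ) ∘ₗ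
          (TensorProduct.assoc ℂ H H H).toLinearMap)
        ((LinearMap.mul' ℂ ℂ ∘ₗ TensorProduct.map Coalgebra.counit χ') ∘ₗ
          (TensorProduct.assoc ℂ H H H).toLinearMap)
        = (conv (LinearMap.mul' ℂ ℂ ∘ₗ TensorProduct.map Coalgebra.counit χ)
            (LinearMap.mul' ℂ ℂ ∘ₗ TensorProduct.map Coalgebra.counit χ')) ∘ₗ
          (TensorProduct.assoc ℂ H H H).toLinearMap := (conv_comp hasc _ _).symm
    simp only [LinearMap.comp_assoc] at e
    rw [e, conv_map_scalar, h1, conv_counit_left, ← counit_T'_eq, counit_asc]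
  -- the cocycle identity for χ, restated
  have hχc' : conv (LinearMap.mul' ℂ ℂ ∘ₗ TensorProduct.map χ Coalgebra.counit)
      (χ ∘ₗ TensorProduct.map (LinearMap.mul' ℂ H) LinearMap.id)
      = conv (LinearMap.mul' ℂ ℂ ∘ₗ TensorProduct.map Coalgebra.counit χ ∘ₗ
          (TensorProduct.assoc ℂ H H H).toLinearMap)
        (χ ∘ₗ TensorProduct.map LinearMap.id (LinearMap.mul' ℂ H) ∘ₗ
          (TensorProduct.assoc ℂ H H H).toLinearMap) := hχc
  have e1 : conv (conv (χ' ∘ₗ TensorProduct.map (LinearMap.mul' ℂ H) LinearMap.id)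
        (LinearMap.mul' ℂ ℂ ∘ₗ TensorProduct.map χ' Coalgebra.counit))
      (conv (LinearMap.mul' ℂ ℂ ∘ₗ TensorProduct.map χ Coalgebra.counit)
        (χ ∘ₗ TensorProduct.map (LinearMap.mul' ℂ H) LinearMap.id))
      = Coalgebra.counit := by
    rw [conv_assoc, ← conv_assoc
        (LinearMap.mul' ℂ ℂ ∘ₗ TensorProduct.map χ' (Coalgebra.counit : H →ₗ[ℂ] ℂ))
        (LinearMap.mul' ℂ ℂ ∘ₗ TensorProduct.map χ (Coalgebra.counit : H →ₗ[ℂ] ℂ))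
        (χ ∘ₗ TensorProduct.map (LinearMap.mul' ℂ H) LinearMap.id),
      hQ'Q, conv_counit_left, hP'P]
  have e2 : conv (conv (LinearMap.mul' ℂ ℂ ∘ₗ TensorProduct.map Coalgebra.counit χ ∘ₗ
          (TensorProduct.assoc ℂ H H H).toLinearMap)
        (χ ∘ₗ TensorProduct.map LinearMap.id (LinearMap.mul' ℂ H) ∘ₗ
          (TensorProduct.assoc ℂ H H H).toLinearMap))
      (conv (χ' ∘ₗ TensorProduct.map LinearMap.id (LinearMap.mul' ℂ H) ∘ₗ
          (TensorProduct.assoc ℂ H H H).toLinearMap)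
        (LinearMap.mul' ℂ ℂ ∘ₗ TensorProduct.map Coalgebra.counit χ' ∘ₗ
          (TensorProduct.assoc ℂ H H H).toLinearMap))
      = Coalgebra.counit := by
    rw [conv_assoc, ← conv_assoc
        (χ ∘ₗ TensorProduct.map LinearMap.id (LinearMap.mul' ℂ H) ∘ₗ
          (TensorProduct.assoc ℂ H H H).toLinearMap)
        (χ' ∘ₗ TensorProduct.map LinearMap.id (LinearMap.mul' ℂ H) ∘ₗ
          (TensorProduct.assoc ℂ H H H).toLinearMap)
        (LinearMap.mul' ℂ ℂ ∘ₗ TensorProduct.map (Coalgebra.counit : H →ₗ[ℂ] ℂ) χ' ∘ₗ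
          (TensorProduct.assoc ℂ H H H).toLinearMap),
      hSS', conv_counit_left, hRR']
  calc conv (χ' ∘ₗ TensorProduct.map (LinearMap.mul' ℂ H) LinearMap.id)
        (LinearMap.mul' ℂ ℂ ∘ₗ TensorProduct.map χ' Coalgebra.counit)
      = conv (conv (χ' ∘ₗ TensorProduct.map (LinearMap.mul' ℂ H) LinearMap.id)
          (LinearMap.mul' ℂ ℂ ∘ₗ TensorProduct.map χ' Coalgebra.counit)) Coalgebra.counit :=
        (conv_counit_right _).symm
    _ = conv (conv (χ' ∘ₗ TensorProduct.map (LinearMap.mul' ℂ H) LinearMap.id)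
          (LinearMap.mul' ℂ ℂ ∘ₗ TensorProduct.map χ' Coalgebra.counit))
        (conv (conv (LinearMap.mul' ℂ ℂ ∘ₗ TensorProduct.map Coalgebra.counit χ ∘ₗ
            (TensorProduct.assoc ℂ H H H).toLinearMap)
          (χ ∘ₗ TensorProduct.map LinearMap.id (LinearMap.mul' ℂ H) ∘ₗ
            (TensorProduct.assoc ℂ H H H).toLinearMap))
         (conv (χ' ∘ₗ TensorProduct.map LinearMap.id (LinearMap.mul' ℂ H) ∘ₗ
            (TensorProduct.assoc ℂ H H H).toLinearMap)
          (LinearMap.mul' ℂ ℂ ∘ₗ TensorProduct.map Coalgebra.counit χ' ∘ₗ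
            (TensorProduct.assoc ℂ H H H).toLinearMap))) := by rw [e2]
    _ = conv (conv (χ' ∘ₗ TensorProduct.map (LinearMap.mul' ℂ H) LinearMap.id)
          (LinearMap.mul' ℂ ℂ ∘ₗ TensorProduct.map χ' Coalgebra.counit))
        (conv (conv (LinearMap.mul' ℂ ℂ ∘ₗ TensorProduct.map χ Coalgebra.counit)
          (χ ∘ₗ TensorProduct.map (LinearMap.mul' ℂ H) LinearMap.id))
         (conv (χ' ∘ₗ TensorProduct.map LinearMap.id (LinearMap.mul' ℂ H) ∘ₗ
            (TensorProduct.assoc ℂ H H H).toLinearMap)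
          (LinearMap.mul' ℂ ℂ ∘ₗ TensorProduct.map Coalgebra.counit χ' ∘ₗ
            (TensorProduct.assoc ℂ H H H).toLinearMap))) := by rw [← hχc']
    _ = conv (conv (conv (χ' ∘ₗ TensorProduct.map (LinearMap.mul' ℂ H) LinearMap.id)
          (LinearMap.mul' ℂ ℂ ∘ₗ TensorProduct.map χ' Coalgebra.counit))
         (conv (LinearMap.mul' ℂ ℂ ∘ₗ TensorProduct.map χ Coalgebra.counit)
          (χ ∘ₗ TensorProduct.map (LinearMap.mul' ℂ H) LinearMap.id)))
        (conv (χ' ∘ₗ TensorProduct.map LinearMap.id (LinearMap.mul' ℂ H) ∘ₗ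
            (TensorProduct.assoc ℂ H H H).toLinearMap)
          (LinearMap.mul' ℂ ℂ ∘ₗ TensorProduct.map Coalgebra.counit χ' ∘ₗ
            (TensorProduct.assoc ℂ H H H).toLinearMap)) := (conv_assoc _ _ _).symm
    _ = conv Coalgebra.counit
        (conv (χ' ∘ₗ TensorProduct.map LinearMap.id (LinearMap.mul' ℂ H) ∘ₗ
            (TensorProduct.assoc ℂ H H H).toLinearMap)
          (LinearMap.mul' ℂ ℂ ∘ₗ TensorProduct.map Coalgebra.counit χ' ∘ₗ
            (TensorProduct.assoc ℂ H H H).toLinearMap)) := by rw [e1]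
    _ = conv (χ' ∘ₗ TensorProduct.map LinearMap.id (LinearMap.mul' ℂ H) ∘ₗ
            (TensorProduct.assoc ℂ H H H).toLinearMap)
          (LinearMap.mul' ℂ ℂ ∘ₗ TensorProduct.map Coalgebra.counit χ' ∘ₗ
            (TensorProduct.assoc ℂ H H H).toLinearMap) := conv_counit_left _

end MainAux

/-- If `ω, χ` are normalized convolution-invertible 2-cocycle functionals on a Hopf
algebra `H`, the twisted product `h · g = ω(h₍₁₎,g₍₁₎) h₍₂₎g₍₂₎ χ⁻¹(h₍₃₎,g₍₃₎)` on the
underlying vector space of `H` is associative with the same unit as `H`. -/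
theorem twistedMul_assoc_and_unit (ω χ χ' : H ⊗[ℂ] H →ₗ[ℂ] ℂ)
    (hω : IsNormalizedCocycle ω) (hχ : IsNormalizedCocycle χ)
    (hχ' : conv χ χ' = Coalgebra.counit ∧ conv χ' χ = Coalgebra.counit) :
    (twistedMul ω χ' ∘ₗ TensorProduct.map (twistedMul ω χ') LinearMap.id
      = twistedMul ω χ' ∘ₗ TensorProduct.map LinearMap.id (twistedMul ω χ') ∘ₗ
        (TensorProduct.assoc ℂ H H H).toLinearMap) ∧
    (∀ h : H, twistedMul ω χ' ((1 : H) ⊗ₜ[ℂ] h) = h) ∧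
    (∀ h : H, twistedMul ω χ' (h ⊗ₜ[ℂ] (1 : H)) = h) := by
  obtain ⟨h1, h2⟩ := hχ'
  have hα := compat_map (compat_mul (H := H)) (compat_id (C := H))
  have hβ := compat_map (compat_id (C := H)) (compat_mul (H := H))
  have hasc := compat_assoc (C := H) (D := H) (D' := H)
  have hidH : conv (conv (cunit : H →ₗ[ℂ] H) LinearMap.id) cunit = LinearMap.id := by
    rw [conv_one_left, conv_one_right]
  refine ⟨?_, ?_, ?_⟩
  · -- associativity
    have B1 : TensorProduct.map (twistedMul ω χ') (LinearMap.id : H →ₗ[ℂ] H)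
        = conv (conv (Algebra.linearMap ℂ (H ⊗[ℂ] H) ∘ₗ
              (LinearMap.mul' ℂ ℂ ∘ₗ TensorProduct.map ω Coalgebra.counit))
            (TensorProduct.map (LinearMap.mul' ℂ H) LinearMap.id))
          (Algebra.linearMap ℂ (H ⊗[ℂ] H) ∘ₗ
              (LinearMap.mul' ℂ ℂ ∘ₗ TensorProduct.map χ' Coalgebra.counit)) := by
      unfold twistedMul toScalarMap
      rw [← scalarG ω, ← scalarG χ', ← map_conv, ← map_conv, hidH]
    have B2 : TensorProduct.map (LinearMap.id : H →ₗ[ℂ] H) (twistedMul ω χ')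
        = conv (conv (Algebra.linearMap ℂ (H ⊗[ℂ] H) ∘ₗ
              (LinearMap.mul' ℂ ℂ ∘ₗ TensorProduct.map Coalgebra.counit ω))
            (TensorProduct.map LinearMap.id (LinearMap.mul' ℂ H)))
          (Algebra.linearMap ℂ (H ⊗[ℂ] H) ∘ₗ
              (LinearMap.mul' ℂ ℂ ∘ₗ TensorProduct.map Coalgebra.counit χ')) := by
      unfold twistedMul toScalarMap
      rw [← scalarG' ω, ← scalarG' χ', ← map_conv, ← map_conv, hidH]
    have L3 : twistedMul ω χ' ∘ₗ TensorProduct.map (twistedMul ω χ') LinearMap.id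
        = conv (conv (Algebra.linearMap ℂ H ∘ₗ
              (LinearMap.mul' ℂ ℂ ∘ₗ TensorProduct.map ω Coalgebra.counit))
            (conv (conv (Algebra.linearMap ℂ H ∘ₗ ω ∘ₗ
                  TensorProduct.map (LinearMap.mul' ℂ H) LinearMap.id)
                (LinearMap.mul' ℂ H ∘ₗ TensorProduct.map (LinearMap.mul' ℂ H) LinearMap.id))
              (Algebra.linearMap ℂ H ∘ₗ χ' ∘ₗ
                  TensorProduct.map (LinearMap.mul' ℂ H) LinearMap.id)))
          (Algebra.linearMap ℂ H ∘ₗ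
              (LinearMap.mul' ℂ ℂ ∘ₗ TensorProduct.map χ' Coalgebra.counit)) := by
      rw [B1, comp_conv_scalar_right, comp_conv_scalar_left, twisted_pull ω χ' hα]
    have R3 : twistedMul ω χ' ∘ₗ TensorProduct.map LinearMap.id (twistedMul ω χ')
        = conv (conv (Algebra.linearMap ℂ H ∘ₗ
              (LinearMap.mul' ℂ ℂ ∘ₗ TensorProduct.map Coalgebra.counit ω))
            (conv (conv (Algebra.linearMap ℂ H ∘ₗ ω ∘ₗ
                  TensorProduct.map LinearMap.id (LinearMap.mul' ℂ H))
                (LinearMap.mul' ℂ H ∘ₗ TensorProduct.map LinearMap.id (LinearMap.mul' ℂ H)))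
              (Algebra.linearMap ℂ H ∘ₗ χ' ∘ₗ
                  TensorProduct.map LinearMap.id (LinearMap.mul' ℂ H))))
          (Algebra.linearMap ℂ H ∘ₗ
              (LinearMap.mul' ℂ ℂ ∘ₗ TensorProduct.map Coalgebra.counit χ')) := by
      rw [B2, comp_conv_scalar_right, comp_conv_scalar_left, twisted_pull ω χ' hβ]
    have hcω2 : conv (Algebra.linearMap ℂ H ∘ₗ
          LinearMap.mul' ℂ ℂ ∘ₗ TensorProduct.map ω Coalgebra.counit)
        (Algebra.linearMap ℂ H ∘ₗ ω ∘ₗ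
          TensorProduct.map (LinearMap.mul' ℂ H) LinearMap.id)
        = conv (Algebra.linearMap ℂ H ∘ₗ
            LinearMap.mul' ℂ ℂ ∘ₗ TensorProduct.map Coalgebra.counit ω ∘ₗ
              (TensorProduct.assoc ℂ H H H).toLinearMap)
          (Algebra.linearMap ℂ H ∘ₗ ω ∘ₗ
            TensorProduct.map LinearMap.id (LinearMap.mul' ℂ H) ∘ₗ
              (TensorProduct.assoc ℂ H H H).toLinearMap) := by
      have hcω : conv (LinearMap.mul' ℂ ℂ ∘ₗ TensorProduct.map ω Coalgebra.counit)
          (ω ∘ₗ TensorProduct.map (LinearMap.mul' ℂ H) LinearMap.id)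
          = conv (LinearMap.mul' ℂ ℂ ∘ₗ TensorProduct.map Coalgebra.counit ω ∘ₗ
              (TensorProduct.assoc ℂ H H H).toLinearMap)
            (ω ∘ₗ TensorProduct.map LinearMap.id (LinearMap.mul' ℂ H) ∘ₗ
              (TensorProduct.assoc ℂ H H H).toLinearMap) := hω.cocycle
      rw [← comp_conv algebraMap_mul'_comp, ← comp_conv algebraMap_mul'_comp, hcω]
    have htail2 : conv (Algebra.linearMap ℂ H ∘ₗ χ' ∘ₗ
          TensorProduct.map (LinearMap.mul' ℂ H) LinearMap.id)
        (Algebra.linearMap ℂ H ∘ₗ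
          LinearMap.mul' ℂ ℂ ∘ₗ TensorProduct.map χ' Coalgebra.counit)
        = conv (Algebra.linearMap ℂ H ∘ₗ χ' ∘ₗ
            TensorProduct.map LinearMap.id (LinearMap.mul' ℂ H) ∘ₗ
              (TensorProduct.assoc ℂ H H H).toLinearMap)
          (Algebra.linearMap ℂ H ∘ₗ
            LinearMap.mul' ℂ ℂ ∘ₗ TensorProduct.map Coalgebra.counit χ' ∘ₗ
              (TensorProduct.assoc ℂ H H H).toLinearMap) := by
      rw [← comp_conv algebraMap_mul'_comp, ← comp_conv algebraMap_mul'_comp,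
        tail_eq χ χ' hχ.cocycle h1 h2]
    rw [show twistedMul ω χ' ∘ₗ TensorProduct.map LinearMap.id (twistedMul ω χ') ∘ₗ
          (TensorProduct.assoc ℂ H H H).toLinearMap
        = (twistedMul ω χ' ∘ₗ TensorProduct.map LinearMap.id (twistedMul ω χ')) ∘ₗ
          (TensorProduct.assoc ℂ H H H).toLinearMap from rfl, R3, L3]
    simp only [conv_comp hasc]
    simp only [LinearMap.comp_assoc]
    rw [N3_asc]
    simp only [conv_assoc]
    rw [htail2, ← conv_assoc, hcω2, conv_assoc]
  · -- left unit
    intro h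
    have hωj : ω ∘ₗ TensorProduct.mk ℂ H H 1 = Coalgebra.counit :=
      LinearMap.ext fun g => hω.normal_left g
    have hχj : χ ∘ₗ TensorProduct.mk ℂ H H 1 = Coalgebra.counit :=
      LinearMap.ext fun g => hχ.normal_left g
    have hχ'j : χ' ∘ₗ TensorProduct.mk ℂ H H 1 = Coalgebra.counit := by
      have e : conv (χ ∘ₗ TensorProduct.mk ℂ H H 1) (χ' ∘ₗ TensorProduct.mk ℂ H H 1)
          = Coalgebra.counit := by
        rw [← conv_comp (compat_mk_one (H := H)), h1, counit_mk_one]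
      rw [hχj, conv_counit_left] at e
      exact e
    have key : twistedMul ω χ' ∘ₗ TensorProduct.mk ℂ H H 1 = LinearMap.id := by
      unfold twistedMul toScalarMap
      rw [conv_comp (compat_mk_one (H := H)), conv_comp (compat_mk_one (H := H))]
      simp only [LinearMap.comp_assoc]
      rw [hωj, hχ'j, mul'_mk_one,
        show Algebra.linearMap ℂ H ∘ₗ (Coalgebra.counit : H →ₗ[ℂ] ℂ) = (cunit : H →ₗ[ℂ] H)
          from rfl, conv_one_left, conv_one_right]
    exact LinearMap.congr_fun key h
  · -- right unit
    intro h
    have hωj : ω ∘ₗ (TensorProduct.mk ℂ H H).flip 1 = Coalgebra.counit :=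
      LinearMap.ext fun g => hω.normal_right g
    have hχj : χ ∘ₗ (TensorProduct.mk ℂ H H).flip 1 = Coalgebra.counit :=
      LinearMap.ext fun g => hχ.normal_right g
    have hχ'j : χ' ∘ₗ (TensorProduct.mk ℂ H H).flip 1 = Coalgebra.counit := by
      have e : conv (χ ∘ₗ (TensorProduct.mk ℂ H H).flip 1)
          (χ' ∘ₗ (TensorProduct.mk ℂ H H).flip 1) = Coalgebra.counit := by
        rw [← conv_comp (compat_mk_one' (H := H)), h1, counit_mk_one']
      rw [hχj, conv_counit_left] at e
      exact e
    have key : twistedMul ω χ' ∘ₗ (TensorProduct.mk ℂ H H).flip 1 = LinearMap.id := by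
      unfold twistedMul toScalarMap
      rw [conv_comp (compat_mk_one' (H := H)), conv_comp (compat_mk_one' (H := H))]
      simp only [LinearMap.comp_assoc]
      rw [hωj, hχ'j, mul'_mk_one',
        show Algebra.linearMap ℂ H ∘ₗ (Coalgebra.counit : H →ₗ[ℂ] ℂ) = (cunit : H →ₗ[ℂ] H)
          from rfl, conv_one_left, conv_one_right]
    exact LinearMap.congr_fun key h


end
end

section
/- Let H be a *-algebraic quantum group (multiplier Hopf *-algebra with positive right invariant integral ψ) and define ψ⁺ on the crossed-product-type algebra H ⊗ Func_c(P,ℂ) with exchange relation fx = x f_{lwt(x)−rwt(x)} by ψ⁺(xf) = ψ(x) Σ_ω f(ω). Then ψ⁺ is positive: ψ⁺(a*a) ≥ 0 for all a. [Specialized: For Pol_q(K) with Haar state ψ, the functional ψ⁺ on Fun⁺_{q,c}(AK) defined by ψ⁺(xf) = ψ(x)Σ_ω f(ω) is positive.] -/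
open scoped ComplexOrder

noncomputable section

/-! Writing `a = Σᵢ xᵢ fᵢ` and evaluating the functions at the shifted points `ω + dᵢ`,
`ψ⁺(a* a)` is the sum over the finitely many relevant `ω ∈ P` of `ψ(y_ω* y_ω)` with
`y_ω = Σᵢ fᵢ(ω + dᵢ) xᵢ`, a sum of nonnegative numbers by positivity of `ψ`. -/

theorem Finsupp.sum_eq_sum_add_right {α M N : Type*} [AddGroup α] [Zero M] [AddCommMonoid N]
    (g : α →₀ M) (h : α → M → N) (h_zero : ∀ a, h a 0 = 0) (t : α) (s : Finset α)
    (hs : ∀ a ∈ g.support, a - t ∈ s) :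
    g.sum h = ∑ a ∈ s, h (a + t) (g (a + t)) := by
  have hsub : g.support ⊆ s.map (Equiv.addRight t).toEmbedding := fun a ha =>
    Finset.mem_map_equiv.2 (by simpa [sub_eq_add_neg] using hs a ha)
  rw [g.sum_of_support_subset hsub h fun a _ => h_zero a, Finset.sum_map]
  rfl

theorem LinearMap.map_star_sum_smul_mul_sum_smul {ι K A : Type*} [CommSemiring K] [StarRing K]
    [Semiring A] [StarRing A] [Algebra K A] [StarModule K A]
    (ψ : A →ₗ[K] K) (s : Finset ι) (c : ι → K) (x : ι → A) :
    ψ (star (∑ i ∈ s, c i • x i) * ∑ j ∈ s, c j • x j) =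
      ∑ i ∈ s, ∑ j ∈ s, ψ (star (x i) * x j) * (star (c i) * c j) := by
  rw [star_sum, Finset.sum_mul, map_sum]
  refine Finset.sum_congr rfl fun i _ => ?_
  rw [Finset.mul_sum, map_sum]
  refine Finset.sum_congr rfl fun j _ => ?_
  rw [star_smul, smul_mul_smul_comm, map_smul, smul_eq_mul, mul_comm]

theorem psiPlus_positive_general
    {A : Type} [Ring A] [Algebra ℂ A] [StarRing A] [StarModule ℂ A]
    {P : Type} [AddCommGroup P]
    (ψ : A →ₗ[ℂ] ℂ)
    (hψpos : ∀ x : A, 0 ≤ ψ (star x * x))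
    (n : ℕ) (x : Fin n → A) (d : Fin n → P) (f : Fin n → (P →₀ ℂ)) :
    0 ≤ ∑ i, ∑ j, ψ (star (x i) * x j) *
      ((f j).sum fun ω c => starRingEnd ℂ ((f i) (ω + d i - d j)) * c) := by
  classical
  set S : Finset P := Finset.univ.biUnion fun i => (f i).support.image (· - d i)
  have hS : ∀ j, ∀ ω ∈ (f j).support, ω - d j ∈ S := fun j ω hω =>
    Finset.mem_biUnion.2 ⟨j, Finset.mem_univ _, Finset.mem_image_of_mem _ hω⟩
  have hinner : ∀ i j, ((f j).sum fun ω c => starRingEnd ℂ ((f i) (ω + d i - d j)) * c) =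
      ∑ ω ∈ S, star (f i (ω + d i)) * f j (ω + d j) := fun i j => by
    rw [Finsupp.sum_eq_sum_add_right _ _ (fun _ => mul_zero _) (d j) S (hS j)]
    simp only [add_right_comm _ (d j), add_sub_cancel_right, starRingEnd_apply]
  calc (0 : ℂ) ≤ ∑ ω ∈ S, ψ (star (∑ i, f i (ω + d i) • x i) * ∑ j, f j (ω + d j) • x j) :=
        Finset.sum_nonneg fun ω _ => hψpos _
    _ = ∑ i, ∑ j, ψ (star (x i) * x j) * ∑ ω ∈ S, star (f i (ω + d i)) * f j (ω + d j) := by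
        simp_rw [ψ.map_star_sum_smul_mul_sum_smul, Finset.mul_sum]
        rw [Finset.sum_comm]
        exact Finset.sum_congr rfl fun i _ => Finset.sum_comm
    _ = _ := by simp only [hinner]

/-- Positivity of the invariant integral `ψ⁺` on the amplified algebra
`Fun⁺_{q,c}(AK) = Pol_q(K) · Func_c(P,ℂ)`, with exchange relation
`f·x = x·f_{lwt(x)−rwt(x)}`, defined by `ψ⁺(xf) = ψ(x)·Σ_ω f(ω)`.

A general element is `a = Σᵢ xᵢfᵢ` with `xᵢ ∈ A` bi-homogeneous with `d i = lwt(xᵢ) − rwt(xᵢ)`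
and `fᵢ ∈ Func_c(P,ℂ)`. Expanding with the exchange relation,
`ψ⁺(a*a) = Σ_{i,j} ψ(xᵢ* xⱼ) · Σ_ω conj(fᵢ(ω + dᵢ − dⱼ)) fⱼ(ω)`, and the content of the
statement is that this quantity is nonnegative whenever `ψ` is a positive functional. -/
theorem psiPlus_positive
    {A : Type} [Ring A] [Algebra ℂ A] [StarRing A] [StarModule ℂ A]
    {P : Type} [AddCommGroup P] [DecidableEq P]
    (ψ : A →ₗ[ℂ] ℂ)
    (hψpos : ∀ x : A, 0 ≤ ψ (star x * x))
    (n : ℕ) (x : Fin n → A) (d : Fin n → P) (f : Fin n → (P →₀ ℂ)) :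
    0 ≤ ∑ i, ∑ j, ψ (star (x i) * x j) *
      ((f j).sum fun ω c => starRingEnd ℂ ((f i) (ω + d i - d j)) * c) :=
  psiPlus_positive_general ψ hψpos n x d f
end
end

section
/- In the rank-one case, the assignment U_ω ↦ U_ω, Z_ω ↦ Z_ω, X ↦ U_α E defines a *-homomorphism from the tensor product Ũ_q⁰(h_ℝ) ⊗ U_q⁰(n_ℝ) into Ũ_q⁰(b_ℝ); i.e., the images of X and X* commute with the images of all U_ω and Z_ω, and satisfy the deformed Heisenberg relation (U_αE)(U_αE)* − q⁻²(U_αE)*(U_αE) = −1/(q−q⁻¹). -/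
noncomputable section

/-- Rank-one case (`g = sl₂`, `P = ℤ·(α/2)`, indexed by `m ∈ ℤ` with `ω = m·α/2`, so
`(ω,χ) = mn/2` and `(ω,α) = m`): in `Ũ_q⁰(b_ℝ)` — generated by `U_ω = u m`, `Z_ω = z m`,
`E`, `F` with the relations listed below — the assignment `U_ω ↦ U_ω`, `Z_ω ↦ Z_ω`,
`X ↦ U_α E` defines a *-homomorphism from `Ũ_q⁰(h_ℝ) ⊗ U_q⁰(n_ℝ)` into `Ũ_q⁰(b_ℝ)`:
the images of `X` and `X*` commute with the images of all `U_ω` and `Z_ω`, and satisfy the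
deformed Heisenberg relation `(U_αE)(U_αE)* − q⁻²(U_αE)*(U_αE) = −1/(q−q⁻¹)`. -/
theorem tensor_decomposition_rank_one
    (q : ℝ) (hq0 : 0 < q) (hq1 : q < 1)
    {A : Type} [Ring A] [Algebra ℂ A] [StarRing A] [StarModule ℂ A]
    (u z : ℤ → A) (E F : A)
    -- `Ũ_q⁰(h_ℝ)` part: `u` unitary, `z` self-adjoint, `u m z n = q^{mn/2} z n u m`
    (hu0 : u 0 = 1) (huadd : ∀ m n, u (m + n) = u m * u n)
    (hustar : ∀ m, star (u m) = u (-m))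
    (hz0 : z 0 = 1) (hzadd : ∀ m n, z (m + n) = z m * z n)
    (hzstar : ∀ m, star (z m) = z m)
    (huz : ∀ m n, u m * z n = ((q ^ (((m * n : ℤ) : ℝ) / 2) : ℝ) : ℂ) • (z n * u m))
    -- interaction with `E` and `F`: `U_ωEU_ω* = E`, `U_ωFU_ω* = q^{−(ω,α)}F`,
    -- `Z_ωE = q^{(ω,α)}EZ_ω`, `Z_ωF = FZ_ω`
    (huE : ∀ m, u m * E = E * u m)
    (huF : ∀ m, u m * F = ((q : ℂ) ^ (-m) : ℂ) • (F * u m))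
    (hzE : ∀ m, z m * E = ((q : ℂ) ^ (m : ℤ)) • (E * z m))
    (hzF : ∀ m, z m * F = F * z m)
    -- the *-structure: `E* = F·L_α` with `L_α = q^{−1} u 2 z 2` (here `α = 2·(α/2)`)
    (hEstar : star E = F * (((q : ℝ)⁻¹ : ℂ) • (u 2 * z 2)))
    -- `EF − FE = −L_α⁻¹/(q−q⁻¹)` with `L_α⁻¹ = q·(z (−2) u (−2))`
    (hEF : E * F - F * E
      = (-((q : ℂ) - (q : ℂ)⁻¹)⁻¹) • ((q : ℂ) • (z (-2) * u (-2)))) :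
    let X : A := u 2 * E
    (∀ m, u m * X = X * u m) ∧
    (∀ m, z m * X = X * z m) ∧
    (∀ m, u m * star X = star X * u m) ∧
    (∀ m, z m * star X = star X * z m) ∧
    (X * star X - ((q : ℂ)⁻¹ ^ 2) • (star X * X)
      = (-((q : ℂ) - (q : ℂ)⁻¹)⁻¹) • (1 : A)) := by
  intro X
  have hqc : (q : ℂ) ≠ 0 := by exact_mod_cast hq0.ne'
  -- convert the rpow scalars to integer powers
  have hcast : ∀ m n k : ℤ, m * n = 2 * k →
      ((q ^ (((m * n : ℤ) : ℝ) / 2) : ℝ) : ℂ) = (q : ℂ) ^ k := by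
    intro m n k h
    have h1 : (((m * n : ℤ) : ℝ) / 2) = ((k : ℤ) : ℝ) := by rw [h]; push_cast; ring
    rw [h1, Real.rpow_intCast]
    push_cast
    ring
  have hu2z : ∀ n : ℤ, u 2 * z n = ((q : ℂ) ^ n) • (z n * u 2) := by
    intro n; have h := huz 2 n; rwa [hcast 2 n n (by ring)] at h
  have hum2z : ∀ n : ℤ, u (-2) * z n = ((q : ℂ) ^ (-n)) • (z n * u (-2)) := by
    intro n; have h := huz (-2) n; rwa [hcast (-2) n (-n) (by ring)] at h
  have hz_u2 : ∀ n : ℤ, z n * u 2 = ((q : ℂ) ^ (-n)) • (u 2 * z n) := by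
    intro n
    rw [hu2z n, smul_smul, ← zpow_add₀ hqc]
    simp
  have hz_um2 : ∀ n : ℤ, z n * u (-2) = ((q : ℂ) ^ n) • (u (-2) * z n) := by
    intro n
    rw [hum2z n, smul_smul, ← zpow_add₀ hqc]
    simp
  have huu : u 2 * u (-2) = 1 := by rw [← huadd]; norm_num [hu0]
  -- part 1
  have p1 : ∀ m, u m * X = X * u m := by
    intro m
    show u m * (u 2 * E) = (u 2 * E) * u m
    rw [← mul_assoc, ← huadd, add_comm, huadd, mul_assoc, huE, ← mul_assoc]
  -- part 2
  have p2 : ∀ m, z m * X = X * z m := by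
    intro m
    show z m * (u 2 * E) = (u 2 * E) * z m
    rw [← mul_assoc, hz_u2 m, smul_mul_assoc, mul_assoc, hzE m, mul_smul_comm, smul_smul,
      ← zpow_add₀ hqc]
    simp [mul_assoc]
  -- parts 3,4 via star
  have p3 : ∀ m, u m * star X = star X * u m := by
    intro m
    have h := congrArg star (p1 (-m))
    simp only [star_mul, hustar, neg_neg] at h
    exact h.symm
  have p4 : ∀ m, z m * star X = star X * z m := by
    intro m
    have h := congrArg star (p2 m)
    simp only [star_mul, hzstar] at h
    exact h.symm
  -- star X = q • (F * z 2)
  have hsX : star X = (q : ℂ) • (F * z 2) := by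
    show star (u 2 * E) = _
    rw [star_mul, hustar, hEstar]
    rw [mul_smul_comm, smul_mul_assoc]
    rw [mul_assoc, mul_assoc, hz_um2 2, mul_smul_comm, mul_smul_comm, smul_smul]
    rw [← mul_assoc (u 2), huu, one_mul]
    congr 1
    push_cast
    rw [show ((2:ℤ)) = ((2:ℕ):ℤ) by norm_num, zpow_natCast]
    field_simp
  refine ⟨p1, p2, p3, p4, ?_⟩
  -- main relation
  have hXsX : X * star X = (q : ℂ) • (u 2 * (E * F) * z 2) := by
    rw [hsX]
    show (u 2 * E) * ((q : ℂ) • (F * z 2)) = _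
    rw [mul_smul_comm]
    congr 1
    noncomm_ring
  have hFu2 : F * u 2 = ((q : ℂ) ^ (2 : ℤ)) • (u 2 * F) := by
    calc F * u 2 = ((q : ℂ) ^ (2 : ℤ)) • (((q : ℂ) ^ (-2 : ℤ)) • (F * u 2)) := by
          rw [smul_smul, ← zpow_add₀ hqc]; norm_num
      _ = ((q : ℂ) ^ (2 : ℤ)) • (u 2 * F) := by rw [← huF 2]
  have hsXX : star X * X = ((q : ℂ) ^ (3 : ℤ)) • (u 2 * (F * E) * z 2) := by
    rw [hsX]
    show ((q : ℂ) • (F * z 2)) * (u 2 * E) = _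
    rw [smul_mul_assoc, mul_assoc, ← mul_assoc (z 2), hz_u2 2, smul_mul_assoc,
      mul_smul_comm, smul_smul, mul_assoc, mul_assoc, hzE 2, mul_smul_comm,
      mul_smul_comm, smul_smul, ← mul_assoc, ← mul_assoc, hFu2]
    simp only [smul_mul_assoc, mul_smul_comm, smul_smul]
    congr 1
    · rw [show ((-2:ℤ)) = -((2:ℕ):ℤ) by norm_num, zpow_neg, zpow_natCast,
        show ((2:ℤ)) = ((2:ℕ):ℤ) by norm_num, zpow_natCast,
        show ((3:ℤ)) = ((3:ℕ):ℤ) by norm_num, zpow_natCast]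
      field_simp
    · noncomm_ring
  rw [hXsX, hsXX, smul_smul]
  have hsc : (q : ℂ)⁻¹ ^ 2 * (q : ℂ) ^ (3 : ℤ) = (q : ℂ) := by
    rw [show ((3:ℤ)) = ((3:ℕ):ℤ) by norm_num, zpow_natCast]
    field_simp
  rw [hsc, ← smul_sub, ← sub_mul, ← mul_sub, hEF]
  rw [mul_smul_comm, mul_smul_comm, smul_mul_assoc, smul_mul_assoc, smul_smul, smul_smul]
  rw [← mul_assoc, hu2z (-2), smul_mul_assoc, smul_mul_assoc, smul_smul]
  rw [mul_assoc (z (-2)), huu, mul_one, ← hzadd]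
  norm_num [hz0]
  congr 1
  have hne : (q : ℂ) - (q : ℂ)⁻¹ ≠ 0 := by
    have h1 : 1 < q⁻¹ := by
      rw [lt_inv_comm₀ (by norm_num) hq0]
      simpa using hq1
    have h2 : q - q⁻¹ ≠ 0 := by nlinarith
    have : ((q - q⁻¹ : ℝ) : ℂ) ≠ 0 := by exact_mod_cast h2
    simpa [Complex.ofReal_sub, Complex.ofReal_inv] using this
  have hne2 : ((q : ℂ)) ^ 2 - 1 ≠ 0 := by
    have h2 : (q : ℝ) ^ 2 - 1 ≠ 0 := by nlinarith
    have h3 : ((q ^ 2 - 1 : ℝ) : ℂ) ≠ 0 := by exact_mod_cast h2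
    simpa using h3
  field_simp

end
end
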